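/- Let P be a set of path axioms. Every labeled sequent derivable in G3Kt + LabSt(P) + LabPr(P) is derivable in G3Kt + LabPr(P), i.e., the structural rules LabSt(P) are admissible in G3Kt + LabPr(P). -/

import Mathlib

set_option autoImplicit false

/-! # Common definitions: tense logics, nested/labeled/display calculi
    (following Ciabattoni, Lyon, Ramanayake, Tiu,
     "Display to Labeled Proofs and Back Again for Tense Logics") -/

/-- Diamonds: `wd` = ◇ (white diamond), `bd` = ◆ (black diamond). -/
inductive Dmd : Type
  | wd
  | bd
deriving DecidableEq, Repr

/-- Tense formulae in negation normal form:
    `A ::= p | p̄ | A ∧ A | A ∨ A | □A | ◇A | ■A | ◆A`. -/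
inductive Formula : Type
  | pos : Nat → Formula      -- propositional variable p
  | neg : Nat → Formula      -- negated propositional variable p̄
  | and : Formula → Formula → Formula
  | or : Formula → Formula → Formula
  | box : Formula → Formula   -- □
  | dia : Formula → Formula   -- ◇
  | bbox : Formula → Formula  -- ■
  | bdia : Formula → Formula  -- ◆
deriving DecidableEq, Repr

/-- The De Morgan dual `Ā` of a formula `A`. -/
def Formula.dual : Formula → Formula
  | .pos p => .neg p
  | .neg p => .pos p
  | .and A B => .or A.dual B.dual
  | .or A B => .and A.dual B.dual
  | .box A => .dia A.dual
  | .dia A => .box A.dual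
  | .bbox A => .bdia A.dual
  | .bdia A => .bbox A.dual

/-- `A → B` is defined as `Ā ∨ B`. -/
def Formula.imp (A B : Formula) : Formula := A.dual.or B

/-- `A ↔ B` is defined as `(A → B) ∧ (B → A)`. -/
def Formula.iffF (A B : Formula) : Formula := (A.imp B).and (B.imp A)

/-- `⟨?⟩A` for a diamond `⟨?⟩ ∈ {◇, ◆}`. -/
def dmdF : Dmd → Formula → Formula
  | .wd, A => .dia A
  | .bd, A => .bdia A

/-- `⟨?⟩₁…⟨?⟩ₘ A` for a string of diamonds. -/
def applyDmds : List Dmd → Formula → Formula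
  | [], A => A
  | d :: ds, A => dmdF d (applyDmds ds A)

/-- A general path axiom `ΠA → ΣA`, given by the strings `Π` (ant) and `Σ` (suc). -/
structure GenPath : Type where
  ant : List Dmd
  suc : List Dmd

/-- A path axiom `ΠA → ⟨?⟩A`. -/
structure PathAx : Type where
  ant : List Dmd
  suc : Dmd
deriving DecidableEq

/-- Every path axiom is a general path axiom. -/
def pathToGen (F : PathAx) : GenPath := ⟨F.ant, [F.suc]⟩

/-- All instances `ΠA → ΣA` of the general path axioms in `GP`. -/
def gpInstances (GP : Set GenPath) : Set Formula :=
  {F | ∃ gp ∈ GP, ∃ A : Formula, F = (applyDmds gp.ant A).imp (applyDmds gp.suc A)}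

/-- The Hilbert system `Kt + S`: classical propositional axioms, modus ponens,
    the tense axioms, and necessitation for □ and ■, plus the axioms in `S`. -/
inductive KtProof (S : Set Formula) : Formula → Prop
  | ax {A : Formula} : A ∈ S → KtProof S A
  | pl1 (A B : Formula) : KtProof S (A.imp (B.imp A))
  | pl2 (A B : Formula) : KtProof S ((B.dual.imp A.dual).imp (A.imp B))
  | pl3 (A B C : Formula) :
      KtProof S ((A.imp (B.imp C)).imp ((A.imp B).imp (A.imp C)))
  | tense1 (A : Formula) : KtProof S (A.imp (Formula.box (Formula.bdia A)))
  | tense2 (A : Formula) : KtProof S (A.imp (Formula.bbox (Formula.dia A)))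
  | kbox (A B : Formula) :
      KtProof S ((Formula.box (A.imp B)).imp ((Formula.box A).imp (Formula.box B)))
  | kbbox (A B : Formula) :
      KtProof S ((Formula.bbox (A.imp B)).imp ((Formula.bbox A).imp (Formula.bbox B)))
  | boxdual (A : Formula) :
      KtProof S ((Formula.box A).iffF (Formula.dia A.dual).dual)
  | bboxdual (A : Formula) :
      KtProof S ((Formula.bbox A).iffF (Formula.bdia A.dual).dual)
  | mp {A B : Formula} : KtProof S (A.imp B) → KtProof S A → KtProof S B
  | necbox {A : Formula} : KtProof S A → KtProof S (Formula.box A)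
  | necbbox {A : Formula} : KtProof S A → KtProof S (Formula.bbox A)

/-! ## Nested sequents -/

/-- Nested sequents: `X ::= ε | A | X, X | ∘{X} | •{X}`. -/
inductive NSeq : Type
  | empty
  | fml : Formula → NSeq
  | comma : NSeq → NSeq → NSeq
  | white : NSeq → NSeq   -- ∘{X}
  | black : NSeq → NSeq   -- •{X}
deriving DecidableEq, Repr

/-- Comma is associative and commutative with unit ε: the induced congruence. -/
inductive NEquiv : NSeq → NSeq → Prop
  | refl (X : NSeq) : NEquiv X X
  | symm {X Y : NSeq} : NEquiv X Y → NEquiv Y X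
  | trans {X Y Z : NSeq} : NEquiv X Y → NEquiv Y Z → NEquiv X Z
  | comm (X Y : NSeq) : NEquiv (X.comma Y) (Y.comma X)
  | assoc (X Y Z : NSeq) : NEquiv ((X.comma Y).comma Z) (X.comma (Y.comma Z))
  | unit (X : NSeq) : NEquiv (X.comma NSeq.empty) X
  | commaCongr {X X' Y Y' : NSeq} :
      NEquiv X X' → NEquiv Y Y' → NEquiv (X.comma Y) (X'.comma Y')
  | whiteCongr {X Y : NSeq} : NEquiv X Y → NEquiv X.white Y.white
  | blackCongr {X Y : NSeq} : NEquiv X Y → NEquiv X.black Y.black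

/-- `★₁{… ★ₙ{Y} …}` where `★ⱼ = ∘` if `⟨?⟩ⱼ = ◇` and `★ⱼ = •` if `⟨?⟩ⱼ = ◆`. -/
def nestDmds : List Dmd → NSeq → NSeq
  | [], Y => Y
  | .wd :: ds, Y => (nestDmds ds Y).white
  | .bd :: ds, Y => (nestDmds ds Y).black

/-- The structural rules `NestSt(GP)` (premise, conclusion): for each
    `ΠA → ΣA ∈ GP`, from `X, ★Σ{Y}` infer `X, ★Π{Y}`. -/
def NestSt (GP : Set GenPath) : NSeq → NSeq → Prop :=
  fun prem concl => ∃ gp ∈ GP, ∃ X Y : NSeq,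
    prem = X.comma (nestDmds gp.suc Y) ∧ concl = X.comma (nestDmds gp.ant Y)

/-- The empty set of extension rules on nested sequents. -/
def NoNest : NSeq → NSeq → Prop := fun _ _ => False

/-- The shallow nested (display) calculus `SKT` extended with the
    structural rules `Ext` (relating premise to conclusion); nested sequents are
    treated up to the congruence `NEquiv` (comma is AC with unit ε). -/
inductive SKT (Ext : NSeq → NSeq → Prop) : NSeq → Prop
  | id (X : NSeq) (p : Nat) :
      SKT Ext ((X.comma (.fml (.pos p))).comma (.fml (.neg p)))
  | orR {X : NSeq} {A B : Formula} :
      SKT Ext (X.comma ((NSeq.fml A).comma (.fml B))) →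
      SKT Ext (X.comma (.fml (.or A B)))
  | andR {X : NSeq} {A B : Formula} :
      SKT Ext (X.comma (.fml A)) → SKT Ext (X.comma (.fml B)) →
      SKT Ext (X.comma (.fml (.and A B)))
  | ctr {X Y : NSeq} : SKT Ext (X.comma (Y.comma Y)) → SKT Ext (X.comma Y)
  | wk {X Y : NSeq} : SKT Ext X → SKT Ext (X.comma Y)
  | rf {X Y : NSeq} : SKT Ext (X.comma Y.white) → SKT Ext (X.black.comma Y)
  | rp {X Y : NSeq} : SKT Ext (X.comma Y.black) → SKT Ext (X.white.comma Y)
  | bbox {X : NSeq} {A : Formula} :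
      SKT Ext (X.comma (NSeq.fml A).black) → SKT Ext (X.comma (.fml (.bbox A)))
  | box {X : NSeq} {A : Formula} :
      SKT Ext (X.comma (NSeq.fml A).white) → SKT Ext (X.comma (.fml (.box A)))
  | bdia {X Y : NSeq} {A : Formula} :
      SKT Ext ((X.comma (Y.comma (.fml A)).black).comma (.fml (.bdia A))) →
      SKT Ext ((X.comma Y.black).comma (.fml (.bdia A)))
  | dia {X Y : NSeq} {A : Formula} :
      SKT Ext ((X.comma (Y.comma (.fml A)).white).comma (.fml (.dia A))) →
      SKT Ext ((X.comma Y.white).comma (.fml (.dia A)))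
  | ext {X Y : NSeq} : Ext X Y → SKT Ext X → SKT Ext Y
  | equiv {X Y : NSeq} : SKT Ext X → NEquiv X Y → SKT Ext Y

/-! ## Deep nested calculus -/

/-- One-hole contexts over nested sequents (up to `NEquiv` this suffices). -/
inductive Ctx : Type
  | hole
  | commaL : Ctx → NSeq → Ctx
  | white : Ctx → Ctx
  | black : Ctx → Ctx

/-- Filling the hole of a context with a nested sequent. -/
def Ctx.fill : Ctx → NSeq → NSeq
  | .hole, X => X
  | .commaL C Y, X => (C.fill X).comma Y
  | .white C, X => (C.fill X).white
  | .black C, X => (C.fill X).black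

/-- The deep nested calculus `DKT` extended with rules `Ext`
    (premise, conclusion); sequents are treated up to `NEquiv`. -/
inductive DKT (Ext : NSeq → NSeq → Prop) : NSeq → Prop
  | id (C : Ctx) (p : Nat) :
      DKT Ext (C.fill ((NSeq.fml (.pos p)).comma (.fml (.neg p))))
  | andD {C : Ctx} {Y : NSeq} {A B : Formula} :
      DKT Ext (C.fill ((NSeq.fml A).comma Y)) →
      DKT Ext (C.fill ((NSeq.fml B).comma Y)) →
      DKT Ext (C.fill ((NSeq.fml (.and A B)).comma Y))
  | orD {C : Ctx} {Y : NSeq} {A B : Formula} :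
      DKT Ext (C.fill ((NSeq.fml A).comma ((NSeq.fml B).comma Y))) →
      DKT Ext (C.fill ((NSeq.fml (.or A B)).comma Y))
  | bboxD {C : Ctx} {A : Formula} :
      DKT Ext (C.fill ((NSeq.fml (.bbox A)).comma (NSeq.fml A).black)) →
      DKT Ext (C.fill (.fml (.bbox A)))
  | boxD {C : Ctx} {A : Formula} :
      DKT Ext (C.fill ((NSeq.fml (.box A)).comma (NSeq.fml A).white)) →
      DKT Ext (C.fill (.fml (.box A)))
  | bdia1 {C : Ctx} {Y : NSeq} {A : Formula} :
      DKT Ext (C.fill ((Y.comma (.fml A)).black.comma (.fml (.bdia A)))) →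
      DKT Ext (C.fill (Y.black.comma (.fml (.bdia A))))
  | bdia2 {C : Ctx} {Y : NSeq} {A : Formula} :
      DKT Ext (C.fill ((Y.comma (.fml (.bdia A))).white.comma (.fml A))) →
      DKT Ext (C.fill ((Y.comma (.fml (.bdia A))).white))
  | dia1 {C : Ctx} {Y : NSeq} {A : Formula} :
      DKT Ext (C.fill ((Y.comma (.fml A)).white.comma (.fml (.dia A)))) →
      DKT Ext (C.fill (Y.white.comma (.fml (.dia A))))
  | dia2 {C : Ctx} {Y : NSeq} {A : Formula} :
      DKT Ext (C.fill ((Y.comma (.fml (.dia A))).black.comma (.fml A))) →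
      DKT Ext (C.fill ((Y.comma (.fml (.dia A))).black))
  | ext {X Y : NSeq} : Ext X Y → DKT Ext X → DKT Ext Y
  | equiv {X Y : NSeq} : DKT Ext X → NEquiv X Y → DKT Ext Y

/-! ## Display rules and display equivalence -/

/-- `DisplayDeriv X Z`: `Z` is derivable from `X` using only the display rules
    (rf) and (rp) (and rearrangement by the comma-congruence `NEquiv`). -/
inductive DisplayDeriv : NSeq → NSeq → Prop
  | refl (X : NSeq) : DisplayDeriv X X
  | equiv {X Y Z : NSeq} : NEquiv X Y → DisplayDeriv Y Z → DisplayDeriv X Z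
  | rf {X Y Z : NSeq} :
      DisplayDeriv (X.black.comma Y) Z → DisplayDeriv (X.comma Y.white) Z
  | rp {X Y Z : NSeq} :
      DisplayDeriv (X.white.comma Y) Z → DisplayDeriv (X.comma Y.black) Z

/-- Two nested sequents are display equivalent when each is derivable from the
    other using only the display rules. -/
def DisplayEquiv (X Y : NSeq) : Prop := DisplayDeriv X Y ∧ DisplayDeriv Y X

/-! ## Labeled sequents and the labeled calculus G3Kt -/

abbrev Label : Type := Nat

/-- A set of relational atoms `Rxy`. -/
abbrev RelSet : Type := Finset (Label × Label)

/-- A labeled sequent `R, Γ`. -/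
abbrev LSeq : Type := RelSet × Multiset (Label × Formula)

/-- The label `z` occurs in the labeled sequent `S`. -/
def occursLS (z : Label) (S : LSeq) : Prop :=
  (∃ w, (z, w) ∈ S.1 ∨ (w, z) ∈ S.1) ∨ ∃ A, (z, A) ∈ S.2

/-- `R_◇ x y := Rxy` and `R_◆ x y := Ryx`. -/
def relAtom : Dmd → Label → Label → Label × Label
  | .wd, x, y => (x, y)
  | .bd, x, y => (y, x)

/-- Relational atoms of a `Π`-chain through the list of labels `ls`. -/
def chainAtoms : List Dmd → List Label → List (Label × Label)
  | d :: ds, a :: b :: rest => relAtom d a b :: chainAtoms ds (b :: rest)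
  | _, _ => []

/-- `ls` is a chain of labels for the diamond string `ds` from `x` to `y`
    (an empty string forces `x = y`). -/
def IsChainList (ds : List Dmd) (x y : Label) (ls : List Label) : Prop :=
  ls.length = ds.length + 1 ∧ ls.head? = some x ∧ ls.getLast? = some y

/-- The structural rules `LabSt(GP)` (premise, conclusion): for `ΠA → ΣA ∈ GP`,
    from `R, R_Π x y, R_Σ x y, Γ` infer `R, R_Π x y, Γ`, where all labels in
    `R_Σ x y` other than `x, y` are eigenvariables. -/
def LabSt (GP : Set GenPath) : LSeq → LSeq → Prop :=
  fun prem concl => ∃ gp ∈ GP,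
    ∃ (R : RelSet) (Γ : Multiset (Label × Formula)) (x y : Label)
      (als sls : List Label),
      IsChainList gp.ant x y als ∧ IsChainList gp.suc x y sls ∧
      concl = (R ∪ (chainAtoms gp.ant als).toFinset, Γ) ∧
      prem = (R ∪ (chainAtoms gp.ant als).toFinset ∪
                (chainAtoms gp.suc sls).toFinset, Γ) ∧
      (∀ z ∈ sls, z ≠ x → z ≠ y → ¬ occursLS z concl)

/-- The empty set of extension rules on labeled sequents. -/
def NoExt : LSeq → LSeq → Prop := fun _ _ => False

/-- Derivations in the labeled calculus `G3Kt` extended with rules `Ext`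
    (relating premise to conclusion). -/
inductive G3KtD (Ext : LSeq → LSeq → Prop) :
    RelSet → Multiset (Label × Formula) → Type
  | id (R : RelSet) (Γ : Multiset (Label × Formula)) (x : Label) (p : Nat) :
      G3KtD Ext R ((x, .pos p) ::ₘ (x, .neg p) ::ₘ Γ)
  | orR (R : RelSet) (Γ : Multiset (Label × Formula)) (x : Label) (A B : Formula)
      (D : G3KtD Ext R ((x, A) ::ₘ (x, B) ::ₘ Γ)) :
      G3KtD Ext R ((x, .or A B) ::ₘ Γ)
  | andR (R : RelSet) (Γ : Multiset (Label × Formula)) (x : Label) (A B : Formula)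
      (D1 : G3KtD Ext R ((x, A) ::ₘ Γ)) (D2 : G3KtD Ext R ((x, B) ::ₘ Γ)) :
      G3KtD Ext R ((x, .and A B) ::ₘ Γ)
  | boxR (R : RelSet) (Γ : Multiset (Label × Formula)) (x y : Label) (A : Formula)
      (hy : ¬ occursLS y (R, (x, Formula.box A) ::ₘ Γ))
      (D : G3KtD Ext (insert (x, y) R) ((y, A) ::ₘ Γ)) :
      G3KtD Ext R ((x, .box A) ::ₘ Γ)
  | diaR (R : RelSet) (Γ : Multiset (Label × Formula)) (x y : Label) (A : Formula)
      (h : (x, y) ∈ R)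
      (D : G3KtD Ext R ((y, A) ::ₘ (x, Formula.dia A) ::ₘ Γ)) :
      G3KtD Ext R ((x, .dia A) ::ₘ Γ)
  | bboxR (R : RelSet) (Γ : Multiset (Label × Formula)) (x y : Label) (A : Formula)
      (hy : ¬ occursLS y (R, (x, Formula.bbox A) ::ₘ Γ))
      (D : G3KtD Ext (insert (y, x) R) ((y, A) ::ₘ Γ)) :
      G3KtD Ext R ((x, .bbox A) ::ₘ Γ)
  | bdiaR (R : RelSet) (Γ : Multiset (Label × Formula)) (x y : Label) (A : Formula)
      (h : (y, x) ∈ R)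
      (D : G3KtD Ext R ((y, A) ::ₘ (x, Formula.bdia A) ::ₘ Γ)) :
      G3KtD Ext R ((x, .bdia A) ::ₘ Γ)
  | ext (R' : RelSet) (Γ' : Multiset (Label × Formula))
      (R : RelSet) (Γ : Multiset (Label × Formula))
      (h : Ext (R', Γ') (R, Γ)) (D : G3KtD Ext R' Γ') : G3KtD Ext R Γ

/-- Derivability in `G3Kt + Ext`. -/
def G3KtDeriv (Ext : LSeq → LSeq → Prop) (R : RelSet)
    (Γ : Multiset (Label × Formula)) : Prop :=
  Nonempty (G3KtD Ext R Γ)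

/-- `Q` holds of every labeled sequent occurring in the derivation `D`
    (including the end sequent). -/
def G3KtD.allSeq {Ext : LSeq → LSeq → Prop} (Q : LSeq → Prop) :
    ∀ {R : RelSet} {Γ : Multiset (Label × Formula)}, G3KtD Ext R Γ → Prop
  | _, _, .id R Γ x p => Q (R, (x, .pos p) ::ₘ (x, .neg p) ::ₘ Γ)
  | _, _, .orR R Γ x A B D => Q (R, (x, .or A B) ::ₘ Γ) ∧ D.allSeq Q
  | _, _, .andR R Γ x A B D1 D2 =>
      Q (R, (x, .and A B) ::ₘ Γ) ∧ D1.allSeq Q ∧ D2.allSeq Q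
  | _, _, .boxR R Γ x _ A _ D => Q (R, (x, .box A) ::ₘ Γ) ∧ D.allSeq Q
  | _, _, .diaR R Γ x _ A _ D => Q (R, (x, .dia A) ::ₘ Γ) ∧ D.allSeq Q
  | _, _, .bboxR R Γ x _ A _ D => Q (R, (x, .bbox A) ::ₘ Γ) ∧ D.allSeq Q
  | _, _, .bdiaR R Γ x _ A _ D => Q (R, (x, .bdia A) ::ₘ Γ) ∧ D.allSeq Q
  | _, _, .ext _ _ R Γ _ D => Q (R, Γ) ∧ D.allSeq Q

/-! ## Paths, inverses, compositions, completion, propagation rules -/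

/-- The inverse of a diamond: `◇⁻¹ = ◆` and `◆⁻¹ = ◇`. -/
def Dmd.inv : Dmd → Dmd
  | .wd => .bd
  | .bd => .wd

/-- The inverse `I(F)` of a path axiom `F`. -/
def PathAx.inv (F : PathAx) : PathAx := ⟨(F.ant.map Dmd.inv).reverse, F.suc.inv⟩

/-- `I(P)`, the set of inverses of the path axioms in `P`. -/
def invSet (P : Set PathAx) : Set PathAx := {F | ∃ G ∈ P, F = G.inv}

/-- The completion `P*`: the smallest set of path axioms containing `P`,
    containing `◇A → ◇A` and `◆A → ◆A`, and closed under compositions. -/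
inductive Completion (P : Set PathAx) : PathAx → Prop
  | base {F : PathAx} : F ∈ P → Completion P F
  | wrefl : Completion P ⟨[Dmd.wd], Dmd.wd⟩
  | brefl : Completion P ⟨[Dmd.bd], Dmd.bd⟩
  | comp {F G : PathAx} (i : Nat) (hi : i < G.ant.length) :
      Completion P F → Completion P G → G.ant.get ⟨i, hi⟩ = F.suc →
      Completion P ⟨G.ant.take i ++ F.ant ++ G.ant.drop (i + 1), G.suc⟩

/-- `(P ∪ I(P))*`. -/
def PStar (P : Set PathAx) : PathAx → Prop := Completion (P ∪ invSet P)

/-- A path from `x` to `y` with the given string of diamonds in the propagation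
    graph determined by the edge set `E`: each `Rxy` contributes the labeled
    edges `(x, y, ◇)` and `(y, x, ◆)`. -/
inductive LPath (E : Finset (Label × Label)) : Label → Label → List Dmd → Prop
  | nil (x : Label) : LPath E x x []
  | fwd {x z y : Label} {ds : List Dmd} :
      (x, z) ∈ E → LPath E z y ds → LPath E x y (Dmd.wd :: ds)
  | bwd {x z y : Label} {ds : List Dmd} :
      (z, x) ∈ E → LPath E z y ds → LPath E x y (Dmd.bd :: ds)

/-- The labeled propagation rules `LabPr(P)` (premise, conclusion):
    from `R, x:⟨?⟩A, y:A, Γ` infer `R, x:⟨?⟩A, Γ`, provided there is a path `π`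
    from `x` to `y` in the propagation graph of the premise whose string `Π`
    satisfies `ΠA → ⟨?⟩A ∈ (P ∪ I(P))*`. -/
def LabPr (P : Set PathAx) : LSeq → LSeq → Prop :=
  fun prem concl =>
    ∃ (R : RelSet) (Γ : Multiset (Label × Formula)) (x y : Label)
      (A : Formula) (d : Dmd) (Pi : List Dmd),
      prem = (R, (x, dmdF d A) ::ₘ (y, A) ::ₘ Γ) ∧
      concl = (R, (x, dmdF d A) ::ₘ Γ) ∧
      LPath R x y Pi ∧ PStar P ⟨Pi, d⟩

/-! ## Labeled graphs, labeled polytrees, and the translations 𝔏 and 𝔑 -/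

/-- A labeled graph `(V, E, L)`: vertices decorated with multisets of formulae. -/
structure LGraph : Type where
  V : Finset Label
  E : Finset (Label × Label)
  L : Label → Multiset Formula

/-- Union of labeled graphs (multiset union of labels at shared vertices). -/
def LGraph.union (G H : LGraph) : LGraph :=
  ⟨G.V ∪ H.V, G.E ∪ H.E, fun z => G.L z + H.L z⟩

/-- Isomorphism of labeled graphs: a bijection between the vertex sets
    preserving edges and vertex labels. -/
def LGraph.Iso (G H : LGraph) : Prop :=
  ∃ f : Label → Label, Set.BijOn f ↑G.V ↑H.V ∧
    (∀ u ∈ G.V, ∀ v ∈ G.V, ((u, v) ∈ G.E ↔ (f u, f v) ∈ H.E)) ∧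
    (∀ v ∈ G.V, G.L v = H.L (f v))

/-- A labeled graph is a labeled polytree when its underlying undirected
    graph is a tree. -/
def LGraph.IsPolytree (G : LGraph) : Prop :=
  (∀ x y : Label, (x, y) ∈ G.E → (y, x) ∉ G.E) ∧
  (∀ e ∈ G.E, e.1 ∈ G.V ∧ e.2 ∈ G.V) ∧
  ((SimpleGraph.fromRel fun a b => (a, b) ∈ G.E).induce (↑G.V : Set Label)).IsTree

/-- The translation `𝔏ₓ` from nested sequents to labeled graphs (relational,
    since fresh vertices may be chosen arbitrarily): `LabT x X G` states that
    `G` is a labeled graph obtained by translating `X` starting at vertex `x`. -/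
inductive LabT : Label → NSeq → LGraph → Prop
  | empty (x : Label) : LabT x .empty ⟨∅, ∅, fun _ => 0⟩
  | fml (x : Label) (A : Formula) :
      LabT x (.fml A) ⟨{x}, ∅, fun z => if z = x then {A} else 0⟩
  | comma {x : Label} {X Y : NSeq} {G H : LGraph} :
      LabT x X G → LabT x Y H → G.V ∩ H.V ⊆ {x} →
      LabT x (X.comma Y) (G.union H)
  | white {x y : Label} {X : NSeq} {G : LGraph} :
      LabT y X G → x ∉ G.V → x ≠ y →
      LabT x X.white ⟨insert x (insert y G.V), insert (x, y) G.E, G.L⟩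
  | black {x y : Label} {X : NSeq} {G : LGraph} :
      LabT y X G → x ∉ G.V → x ≠ y →
      LabT x X.black ⟨insert x (insert y G.V), insert (y, x) G.E, G.L⟩

/-- The translation `𝔑ₓ` from labeled polytrees (rooted at a chosen vertex `x`)
    to nested sequents: the inverse of the translation `𝔏ₓ`. -/
def NTrans (x : Label) (G : LGraph) (X : NSeq) : Prop := LabT x X G

/-- The labeled graph of a labeled sequent `R, Γ`: vertices are the occurring
    labels, edges are given by `R`, and each vertex `x` is labeled by the
    multiset `{A | x:A ∈ Γ}`. -/
def toLGraph (R : RelSet) (Γ : Multiset (Label × Formula)) : LGraph where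
  V := R.image Prod.fst ∪ R.image Prod.snd ∪ (Γ.map Prod.fst).toFinset
  E := R
  L := fun z => (Γ.filter fun p => p.1 = z).map Prod.snd

/-- The multiset of labeled formulae of a labeled graph, read as a sequent. -/
def LGraph.toSeqGamma (G : LGraph) : Multiset (Label × Formula) :=
  G.V.val.bind fun v => (G.L v).map fun A => (v, A)

/-- The set of labels occurring in a labeled sequent. -/
def seqLabels (R : RelSet) (Γ : Multiset (Label × Formula)) : Set Label :=
  {z | (∃ w, (z, w) ∈ R ∨ (w, z) ∈ R) ∨ ∃ A, (z, A) ∈ Γ}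

/-- `R, Γ` is a labeled polytree sequent: its underlying undirected graph
    (on the occurring labels) is a tree. -/
def IsPolytreeSeq (R : RelSet) (Γ : Multiset (Label × Formula)) : Prop :=
  (∀ x y : Label, (x, y) ∈ R → (y, x) ∉ R) ∧
  ((SimpleGraph.fromRel fun a b => (a, b) ∈ R).induce (seqLabels R Γ)).IsTree

/-- The labeled edges `(u, v, ◇)` and `(v, u, ◆)` of the propagation graph
    determined by an edge set. -/
def propEdges (E : Finset (Label × Label)) : Set (Label × Label × Dmd) :=
  {e | ∃ u v : Label, (u, v) ∈ E ∧ (e = (u, v, Dmd.wd) ∨ e = (v, u, Dmd.bd))}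

/-- The deep propagation rules `DeepPr(P)` (premise, conclusion), expressed via
    the labeled polytree representation of nested sequents: from
    `X[⟨?⟩A]ᵢ[A]ⱼ` infer `X[⟨?⟩A]ᵢ[∅]ⱼ`, provided there is a path from node `i`
    (= `u`) to node `j` (= `v`) in the propagation graph of the premise whose
    string `Π` satisfies `ΠA → ⟨?⟩A ∈ (P ∪ I(P))*`. -/
def DeepPrL (P : Set PathAx) : NSeq → NSeq → Prop :=
  fun prem concl =>
    ∃ (r : Label) (G : LGraph) (u v : Label) (A : Formula) (d : Dmd)
      (Pi : List Dmd),
      LabT r prem G ∧ LPath G.E u v Pi ∧ PStar P ⟨Pi, d⟩ ∧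
      dmdF d A ∈ G.L u ∧ A ∈ G.L v ∧
      LabT r concl ⟨G.V, G.E, fun z => if z = v then (G.L v).erase A else G.L z⟩

/-- Substitution of the label `y` by the label `x`. -/
def subLabel (x y z : Label) : Label := if z = y then x else z

/-! ## Auxiliary lemmas for admissibility of LabSt -/

lemma dmd_inv_inv (d : Dmd) : d.inv.inv = d := by cases d <;> rfl

lemma pathax_inv_inv (F : PathAx) : F.inv.inv = F := by
  cases F with
  | mk ant suc =>
    simp only [PathAx.inv, List.map_reverse, List.reverse_reverse,
      List.map_map, PathAx.mk.injEq, dmd_inv_inv, and_true]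
    have : Dmd.inv ∘ Dmd.inv = id := funext fun d => dmd_inv_inv d
    simp [this]

lemma completion_replace {Q : Set PathAx} {ρ σ τ : List Dmd} {s d' : Dmd}
    (hF : Completion Q ⟨σ, s⟩) (h : Completion Q ⟨ρ ++ s :: τ, d'⟩) :
    Completion Q ⟨ρ ++ σ ++ τ, d'⟩ := by
  have hi : ρ.length < (ρ ++ s :: τ).length := by simp
  have hget : (ρ ++ s :: τ).get ⟨ρ.length, hi⟩ = s := by
    simp only [List.get_eq_getElem]
    rw [List.getElem_append_right (Nat.le_refl _)]
    simp
  have hc := Completion.comp (F := ⟨σ, s⟩) (G := ⟨ρ ++ s :: τ, d'⟩)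
    ρ.length hi hF h hget
  have htake : (ρ ++ s :: τ).take ρ.length = ρ := List.take_left
  have hdrop : (ρ ++ s :: τ).drop (ρ.length + 1) = τ := by
    have : ρ ++ s :: τ = (ρ ++ [s]) ++ τ := by simp
    rw [this]
    have : ρ.length + 1 = (ρ ++ [s]).length := by simp
    rw [this, List.drop_left]
  rw [htake, hdrop] at hc
  exact hc

lemma completion_inv {Q : Set PathAx} (hQ : ∀ F ∈ Q, F.inv ∈ Q) :
    ∀ {F : PathAx}, Completion Q F → Completion Q F.inv := by
  intro F hF
  induction hF with
  | base h => exact Completion.base (hQ _ h)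
  | wrefl => exact Completion.brefl
  | brefl => exact Completion.wrefl
  | @comp F G i hi _ _ hget ihF ihG =>
      have hgi : G.ant[i] = F.suc := by simpa [List.get_eq_getElem] using hget
      obtain ⟨α, β, hdec⟩ : ∃ α β, G.ant = α ++ F.suc :: β ∧
          α = G.ant.take i ∧ β = G.ant.drop (i + 1) :=
        ⟨G.ant.take i, G.ant.drop (i + 1), by
          rw [← hgi, List.getElem_cons_drop hi, List.take_append_drop], rfl, rfl⟩
      obtain ⟨hdec, hα, hβ⟩ := hdec
      have eG : G.inv = ⟨(β.map Dmd.inv).reverse ++ F.suc.inv ::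
          (α.map Dmd.inv).reverse, G.suc.inv⟩ := by
        show (⟨(G.ant.map Dmd.inv).reverse, G.suc.inv⟩ : PathAx) = _
        rw [hdec]; simp
      rw [eG] at ihG
      have key := completion_replace (ρ := (β.map Dmd.inv).reverse)
        (σ := (F.ant.map Dmd.inv).reverse) (τ := (α.map Dmd.inv).reverse)
        (s := F.suc.inv) ihF ihG
      have e2 : (PathAx.mk (G.ant.take i ++ F.ant ++ G.ant.drop (i + 1)) G.suc).inv
          = ⟨(β.map Dmd.inv).reverse ++ (F.ant.map Dmd.inv).reverse ++
              (α.map Dmd.inv).reverse, G.suc.inv⟩ := by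
        show (⟨((G.ant.take i ++ F.ant ++ G.ant.drop (i + 1)).map Dmd.inv).reverse,
          G.suc.inv⟩ : PathAx) = _
        rw [← hα, ← hβ]; simp
      rw [e2]
      exact key

lemma lpath_mono {E E' : Finset (Label × Label)} (hsub : E ⊆ E')
    {a b : Label} {σ : List Dmd} (h : LPath E a b σ) : LPath E' a b σ := by
  induction h with
  | nil => exact LPath.nil _
  | fwd h _ ih => exact LPath.fwd (hsub h) ih
  | bwd h _ ih => exact LPath.bwd (hsub h) ih

lemma lpath_append {E : Finset (Label × Label)} {a b c : Label}
    {σ₁ σ₂ : List Dmd} (h1 : LPath E a b σ₁) (h2 : LPath E b c σ₂) :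
    LPath E a c (σ₁ ++ σ₂) := by
  induction h1 with
  | nil => exact h2
  | fwd h _ ih => exact LPath.fwd h (ih h2)
  | bwd h _ ih => exact LPath.bwd h (ih h2)

lemma lpath_reverse {E : Finset (Label × Label)} {a b : Label} {σ : List Dmd}
    (h : LPath E a b σ) : LPath E b a ((σ.map Dmd.inv).reverse) := by
  induction h with
  | nil => exact LPath.nil _
  | @fwd x z y ds h _ ih =>
      simpa [Dmd.inv] using lpath_append ih (LPath.bwd h (LPath.nil _))
  | @bwd x z y ds h _ ih =>
      simpa [Dmd.inv] using lpath_append ih (LPath.fwd h (LPath.nil _))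

lemma pstar_inv {P : Set PathAx} {F : PathAx} (h : PStar P F) : PStar P F.inv := by
  refine completion_inv ?_ h
  rintro G (hG | ⟨H, hH, rfl⟩)
  · exact Or.inr ⟨G, hG, rfl⟩
  · exact Or.inl (by rw [pathax_inv_inv]; exact hH)

lemma pstar_cast {P : Set PathAx} {a b : List Dmd} {s t : Dmd}
    (h : PStar P ⟨a, s⟩) (ha : a = b) (hs : s = t) : PStar P ⟨b, t⟩ := by
  subst ha; subst hs; exact h

lemma path_replace {P : Set PathAx} {R : RelSet} {x y : Label} {d : Dmd}
    {pi : List Dmd} (hP : PStar P ⟨pi, d⟩) (hpi : LPath R x y pi) :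
    ∀ {a b : Label} {σ : List Dmd},
      LPath (insert (relAtom d x y) R) a b σ →
      ∃ σ', LPath R a b σ' ∧
        ∀ ρ d', PStar P ⟨ρ ++ σ, d'⟩ → PStar P ⟨ρ ++ σ', d'⟩ := by
  intro a b σ h
  induction h with
  | nil z => exact ⟨[], LPath.nil z, fun ρ d' h => h⟩
  | @fwd a z b ds hmem _ ih =>
      obtain ⟨σ'', hpath, hsub⟩ := ih
      rcases Finset.mem_insert.mp hmem with he | hR
      · -- the traversed edge is the deleted one, label ◇
        cases d with
        | wd =>
            -- e = (x, y), so a = x, z = y; replace ◇ by pi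
            have hx : a = x ∧ z = y := by
              simpa [relAtom, Prod.ext_iff] using he
            refine ⟨pi ++ σ'', ?_, ?_⟩
            · exact hx.1 ▸ lpath_append hpi (hx.2 ▸ hpath)
            · intro ρ d' hd
              have h1 : PStar P ⟨ρ ++ pi ++ ds, d'⟩ :=
                completion_replace hP hd
              have h2 := hsub (ρ ++ pi) d' (by
                refine pstar_cast h1 ?_ rfl; simp)
              exact pstar_cast h2 (by simp) rfl
        | bd =>
            -- e = (y, x), so a = y, z = x; ◇ = d.inv, replace by pi-inverse
            have hx : a = y ∧ z = x := by
              simpa [relAtom, Prod.ext_iff] using he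
            have hPi : PStar P ⟨(pi.map Dmd.inv).reverse, Dmd.wd⟩ :=
              pstar_inv hP
            refine ⟨(pi.map Dmd.inv).reverse ++ σ'', ?_, ?_⟩
            · exact hx.1 ▸ lpath_append (lpath_reverse hpi) (hx.2 ▸ hpath)
            · intro ρ d' hd
              have h1 : PStar P ⟨ρ ++ (pi.map Dmd.inv).reverse ++ ds, d'⟩ :=
                completion_replace hPi hd
              have h2 := hsub (ρ ++ (pi.map Dmd.inv).reverse) d' (by
                refine pstar_cast h1 ?_ rfl; simp)
              exact pstar_cast h2 (by simp) rfl
      · refine ⟨Dmd.wd :: σ'', LPath.fwd hR hpath, ?_⟩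
        intro ρ d' hd
        have h2 := hsub (ρ ++ [Dmd.wd]) d' (by
          refine pstar_cast hd ?_ rfl; simp)
        exact pstar_cast h2 (by simp) rfl
  | @bwd a z b ds hmem _ ih =>
      obtain ⟨σ'', hpath, hsub⟩ := ih
      rcases Finset.mem_insert.mp hmem with he | hR
      · cases d with
        | wd =>
            -- e = (x, y) = (z, a), so z = x, a = y; ◆ = d.inv
            have hx : z = x ∧ a = y := by
              simpa [relAtom, Prod.ext_iff] using he
            have hPi : PStar P ⟨(pi.map Dmd.inv).reverse, Dmd.bd⟩ :=
              pstar_inv hP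
            refine ⟨(pi.map Dmd.inv).reverse ++ σ'', ?_, ?_⟩
            · exact hx.2 ▸ lpath_append (lpath_reverse hpi) (hx.1 ▸ hpath)
            · intro ρ d' hd
              have h1 : PStar P ⟨ρ ++ (pi.map Dmd.inv).reverse ++ ds, d'⟩ :=
                completion_replace hPi hd
              have h2 := hsub (ρ ++ (pi.map Dmd.inv).reverse) d' (by
                refine pstar_cast h1 ?_ rfl; simp)
              exact pstar_cast h2 (by simp) rfl
        | bd =>
            -- e = (y, x) = (z, a), so z = y, a = x; ◆ = d
            have hx : z = y ∧ a = x := by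
              simpa [relAtom, Prod.ext_iff] using he
            refine ⟨pi ++ σ'', ?_, ?_⟩
            · exact hx.2 ▸ lpath_append hpi (hx.1 ▸ hpath)
            · intro ρ d' hd
              have h1 : PStar P ⟨ρ ++ pi ++ ds, d'⟩ :=
                completion_replace hP hd
              have h2 := hsub (ρ ++ pi) d' (by
                refine pstar_cast h1 ?_ rfl; simp)
              exact pstar_cast h2 (by simp) rfl
      · refine ⟨Dmd.bd :: σ'', LPath.bwd hR hpath, ?_⟩
        intro ρ d' hd
        have h2 := hsub (ρ ++ [Dmd.bd]) d' (by
          refine pstar_cast hd ?_ rfl; simp)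
        exact pstar_cast h2 (by simp) rfl

lemma occursLS_mono {z : Label} {R R' : RelSet} {Γ : Multiset (Label × Formula)}
    (hsub : R ⊆ R') (h : occursLS z (R, Γ)) : occursLS z (R', Γ) := by
  rcases h with ⟨w, hw | hw⟩ | h
  · exact Or.inl ⟨w, Or.inl (hsub hw)⟩
  · exact Or.inl ⟨w, Or.inr (hsub hw)⟩
  · exact Or.inr h

lemma chain_lpath : ∀ (ds : List Dmd) (ls : List Label) (x y : Label)
    (R : RelSet), IsChainList ds x y ls →
    (∀ a ∈ chainAtoms ds ls, a ∈ R) → LPath R x y ds := by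
  intro ds
  induction ds with
  | nil =>
      rintro ls x y R ⟨hlen, hhead, hlast⟩ _
      match ls, hlen with
      | [a], _ =>
          simp only [List.head?_cons, Option.some.injEq] at hhead
          simp only [List.getLast?_singleton, Option.some.injEq] at hlast
          subst hhead; subst hlast; exact LPath.nil _
  | cons d ds ih =>
      rintro ls x y R ⟨hlen, hhead, hlast⟩ hmem
      match ls, hlen with
      | a :: b :: rest, hlen =>
          simp only [List.head?_cons, Option.some.injEq] at hhead
          subst hhead
          have h1 : relAtom d a b ∈ R := hmem _ (by simp [chainAtoms])
          have h2 : LPath R b y ds := by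
            refine ih (b :: rest) b y R ⟨by simpa using hlen, rfl, ?_⟩ ?_
            · rw [← hlast]; rfl
            · intro e he; exact hmem _ (by simp [chainAtoms, he])
          cases d with
          | wd => exact LPath.fwd h1 h2
          | bd => exact LPath.bwd h1 h2

/-- Deleting a relational atom `relAtom d x y` from a derivation, when there is
    a path `pi` from `x` to `y` with `⟨pi, d⟩ ∈ (P ∪ I(P))*`. -/
lemma del_atom (P : Set PathAx) (d : Dmd) (x y : Label) (pi : List Dmd)
    (hP : PStar P ⟨pi, d⟩) :
    ∀ {R' : RelSet} {Γ : Multiset (Label × Formula)},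
      G3KtD (LabPr P) R' Γ → ∀ R : RelSet, R ⊆ R' →
      R' ⊆ insert (relAtom d x y) R → LPath R x y pi →
      Nonempty (G3KtD (LabPr P) R Γ) := by
  intro R' Γ D
  induction D with
  | id R0 Γ0 x' p => intro R _ _ _; exact ⟨.id R Γ0 x' p⟩
  | orR R0 Γ0 x' A B D ih =>
      intro R h1 h2 h3
      obtain ⟨D'⟩ := ih R h1 h2 h3
      exact ⟨.orR R Γ0 x' A B D'⟩
  | andR R0 Γ0 x' A B D1 D2 ih1 ih2 =>
      intro R h1 h2 h3
      obtain ⟨D1'⟩ := ih1 R h1 h2 h3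
      obtain ⟨D2'⟩ := ih2 R h1 h2 h3
      exact ⟨.andR R Γ0 x' A B D1' D2'⟩
  | boxR R0 Γ0 x' y' A hy D ih =>
      intro R h1 h2 h3
      obtain ⟨D'⟩ := ih (insert (x', y') R)
        (Finset.insert_subset_insert _ h1)
        (by
          refine (Finset.insert_subset_insert _ h2).trans ?_
          rw [Finset.insert_comm])
        (lpath_mono (Finset.subset_insert _ _) h3)
      refine ⟨.boxR R Γ0 x' y' A ?_ D'⟩
      exact fun hc => hy (occursLS_mono h1 hc)
  | bboxR R0 Γ0 x' y' A hy D ih =>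
      intro R h1 h2 h3
      obtain ⟨D'⟩ := ih (insert (y', x') R)
        (Finset.insert_subset_insert _ h1)
        (by
          refine (Finset.insert_subset_insert _ h2).trans ?_
          rw [Finset.insert_comm])
        (lpath_mono (Finset.subset_insert _ _) h3)
      refine ⟨.bboxR R Γ0 x' y' A ?_ D'⟩
      exact fun hc => hy (occursLS_mono h1 hc)
  | diaR R0 Γ0 x' y' A hmem D ih =>
      intro R h1 h2 h3
      obtain ⟨D'⟩ := ih R h1 h2 h3
      rcases Finset.mem_insert.mp (h2 hmem) with he | hR
      · -- replace the (◇) rule by a propagation step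
        have D'' : G3KtD (LabPr P) R ((x', Formula.dia A) ::ₘ (y', A) ::ₘ Γ0) :=
          (Multiset.cons_swap _ _ _) ▸ D'
        obtain ⟨σ, hσpath, hσstar⟩ :
            ∃ σ, LPath R x' y' σ ∧ PStar P ⟨σ, Dmd.wd⟩ := by
          cases d with
          | wd =>
              have hx : x' = x ∧ y' = y := by
                simpa [relAtom, Prod.ext_iff] using he
              exact ⟨pi, hx.1 ▸ hx.2 ▸ h3, hP⟩
          | bd =>
              have hx : x' = y ∧ y' = x := by
                simpa [relAtom, Prod.ext_iff] using he
              exact ⟨(pi.map Dmd.inv).reverse,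
                hx.1 ▸ hx.2 ▸ lpath_reverse h3, pstar_inv hP⟩
        refine ⟨.ext R ((x', Formula.dia A) ::ₘ (y', A) ::ₘ Γ0) R
          ((x', Formula.dia A) ::ₘ Γ0) ?_ D''⟩
        exact ⟨R, Γ0, x', y', A, Dmd.wd, σ, rfl, rfl, hσpath, hσstar⟩
      · exact ⟨.diaR R Γ0 x' y' A hR D'⟩
  | bdiaR R0 Γ0 x' y' A hmem D ih =>
      intro R h1 h2 h3
      obtain ⟨D'⟩ := ih R h1 h2 h3
      rcases Finset.mem_insert.mp (h2 hmem) with he | hR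
      · have D'' : G3KtD (LabPr P) R ((x', Formula.bdia A) ::ₘ (y', A) ::ₘ Γ0) :=
          (Multiset.cons_swap _ _ _) ▸ D'
        obtain ⟨σ, hσpath, hσstar⟩ :
            ∃ σ, LPath R x' y' σ ∧ PStar P ⟨σ, Dmd.bd⟩ := by
          cases d with
          | wd =>
              have hx : y' = x ∧ x' = y := by
                simpa [relAtom, Prod.ext_iff] using he
              exact ⟨(pi.map Dmd.inv).reverse,
                hx.1 ▸ hx.2 ▸ lpath_reverse h3, pstar_inv hP⟩
          | bd =>
              have hx : y' = y ∧ x' = x := by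
                simpa [relAtom, Prod.ext_iff] using he
              exact ⟨pi, hx.1 ▸ hx.2 ▸ h3, hP⟩
        refine ⟨.ext R ((x', Formula.bdia A) ::ₘ (y', A) ::ₘ Γ0) R
          ((x', Formula.bdia A) ::ₘ Γ0) ?_ D''⟩
        exact ⟨R, Γ0, x', y', A, Dmd.bd, σ, rfl, rfl, hσpath, hσstar⟩
      · exact ⟨.bdiaR R Γ0 x' y' A hR D'⟩
  | ext R1 Γ1 R0 Γ0 hext D ih =>
      intro R h1 h2 h3
      obtain ⟨Rr, Γb, x', y', A, d', σ, hprem, hconcl, hσpath, hσstar⟩ := hext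
      obtain ⟨hR1, hΓ1⟩ := Prod.mk.injEq .. ▸ hprem
      obtain ⟨hR0, hΓ0⟩ := Prod.mk.injEq .. ▸ hconcl
      subst hR1; subst hΓ1; subst hR0; subst hΓ0
      obtain ⟨D'⟩ := ih R h1 h2 h3
      have hσ' : LPath (insert (relAtom d x y) R) x' y' σ :=
        lpath_mono h2 hσpath
      obtain ⟨σ', hσ'path, hσ'sub⟩ := path_replace hP h3 hσ'
      have hstar' : PStar P ⟨σ', d'⟩ := by
        have := hσ'sub [] d' (by simpa using hσstar)
        simpa using this
      exact ⟨.ext R ((x', dmdF d' A) ::ₘ (y', A) ::ₘ Γb) R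
        ((x', dmdF d' A) ::ₘ Γb)
        ⟨R, Γb, x', y', A, d', σ', rfl, rfl, hσ'path, hstar'⟩ D'⟩

/-- Lemma `internal`: every labeled sequent derivable in
    `G3Kt + LabSt(P) + LabPr(P)` is derivable in `G3Kt + LabPr(P)`, i.e., the
    structural rules `LabSt(P)` are admissible in `G3Kt + LabPr(P)`. -/
theorem labst_admissible_with_labpr (P : Set PathAx) (R : RelSet)
    (Γ : Multiset (Label × Formula))
    (h : G3KtDeriv (fun a b => LabSt (pathToGen '' P) a b ∨ LabPr P a b) R Γ) :
    G3KtDeriv (LabPr P) R Γ := by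
  obtain ⟨D⟩ := h
  induction D with
  | id R0 Γ0 x p => exact ⟨.id R0 Γ0 x p⟩
  | orR R0 Γ0 x A B D ih => obtain ⟨D'⟩ := ih; exact ⟨.orR R0 Γ0 x A B D'⟩
  | andR R0 Γ0 x A B D1 D2 ih1 ih2 =>
      obtain ⟨D1'⟩ := ih1; obtain ⟨D2'⟩ := ih2
      exact ⟨.andR R0 Γ0 x A B D1' D2'⟩
  | boxR R0 Γ0 x y A hy D ih =>
      obtain ⟨D'⟩ := ih; exact ⟨.boxR R0 Γ0 x y A hy D'⟩
  | diaR R0 Γ0 x y A hmem D ih =>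
      obtain ⟨D'⟩ := ih; exact ⟨.diaR R0 Γ0 x y A hmem D'⟩
  | bboxR R0 Γ0 x y A hy D ih =>
      obtain ⟨D'⟩ := ih; exact ⟨.bboxR R0 Γ0 x y A hy D'⟩
  | bdiaR R0 Γ0 x y A hmem D ih =>
      obtain ⟨D'⟩ := ih; exact ⟨.bdiaR R0 Γ0 x y A hmem D'⟩
  | ext R1 Γ1 R0 Γ0 hext D ih =>
      obtain ⟨D'⟩ := ih
      rcases hext with hst | hpr
      · -- a LabSt step: eliminate it using del_atom
        obtain ⟨gp, hgp, R2, Γb, x, y, als, sls, hca, hcs, hconcl, hprem, heig⟩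
          := hst
        obtain ⟨F, hF, rfl⟩ := hgp
        obtain ⟨hlen, hhead, hlast⟩ := hcs
        have h2 : sls.length = 2 := by simpa [pathToGen] using hlen
        obtain ⟨a, b, rfl⟩ : ∃ a b, sls = [a, b] := by
          match sls, h2 with
          | [a, b], _ => exact ⟨a, b, rfl⟩
        have hax : a = x := by simpa using hhead
        have hby : b = y := by simpa [List.getLast?] using hlast
        subst hax; subst hby
        obtain ⟨hR0, hΓ0⟩ := Prod.mk.injEq .. ▸ hconcl
        obtain ⟨hR1, hΓ1⟩ := Prod.mk.injEq .. ▸ hprem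
        subst hR0; subst hΓ0; subst hR1; subst hΓ1
        have hsuc : (chainAtoms (pathToGen F).suc [a, b]).toFinset
            = {relAtom F.suc a b} := by
          simp [pathToGen, chainAtoms]
        have e1 : R2 ∪ (chainAtoms (pathToGen F).ant als).toFinset ∪
              (chainAtoms (pathToGen F).suc [a, b]).toFinset
            = insert (relAtom F.suc a b)
              (R2 ∪ (chainAtoms (pathToGen F).ant als).toFinset) := by
          rw [hsuc, Finset.insert_eq, Finset.union_comm]
        rw [e1] at D'
        have hP : PStar P ⟨F.ant, F.suc⟩ := Completion.base (Or.inl hF)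
        have hpath : LPath (R2 ∪ (chainAtoms (pathToGen F).ant als).toFinset)
            a b F.ant := by
          refine chain_lpath F.ant als a b _ hca ?_
          intro e he
          exact Finset.mem_union_right _ (List.mem_toFinset.mpr he)
        exact del_atom P F.suc a b F.ant hP D' _
          (Finset.subset_insert _ _) (subset_refl _) hpath
      · exact ⟨.ext R1 Γ1 R0 Γ0 hpr D'⟩
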